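/- Every (k,ε)-quantum extractor with k ≤ n − 1 necessarily has seed size d ≥ log(1/ε): there exists a state γ_N with H_min(N)_γ = n − 1 such that for at least one unitary in the family (say U¹), ‖tr_{N\M}[U¹ γ_N (U¹)†] − 1_M/|M|‖_1 = 1, forcing (1/D)·1 ≤ ε, i.e., |D| ≥ 1/ε. -/

import Mathlib

/-!
Let `S` be half of the basis of `H_M` and let `γ` be the maximally mixed state on
`S ⊗ H_{N\M}`, rotated by `(U¹)†`; its largest eigenvalue is `2 / |N| ≤ 2^{-k}`. Under the
seed `1` the output is the uniform distribution on `S`, at trace distance `1` from `1_M/|M|`.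
The output is block diagonal in the seed and the trace norm of a Hermitian matrix dominates
the `ℓ¹`-norm of its diagonal, so the extractor error is at least `1/|D|`.
-/

open Matrix Finset
open scoped ComplexOrder

/-- Trace norm: the sum of the singular values of `A`. -/
noncomputable def traceNorm {n : Type} [Fintype n] [DecidableEq n] (A : Matrix n n ℂ) : ℝ :=
  ∑ i, Real.sqrt ((Matrix.posSemidef_conjTranspose_mul_self A).1.eigenvalues i)

namespace Matrix.IsHermitian

variable {n : Type*} [Fintype n] [DecidableEq n] {A : Matrix n n ℂ}

open Polynomial in
lemma map_eigenvalues_eq_of_charpoly_eq (hA : A.IsHermitian) {μ : n → ℝ}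
    (h : A.charpoly = ∏ i, (X - C (μ i : ℂ))) :
    univ.val.map hA.eigenvalues = univ.val.map μ := by
  have hroots := hA.roots_charpoly_eq_eigenvalues
  rw [h, roots_prod _ _ (prod_ne_zero_iff.mpr fun i _ => X_sub_C_ne_zero _)] at hroots
  simpa [Multiset.map_map, Function.comp_def] using congrArg (Multiset.map Complex.re) hroots.symm

lemma sum_sqrt_eigenvalues_conjTranspose_mul_self (hA : A.IsHermitian) :
    ∑ i, √((posSemidef_conjTranspose_mul_self A).1.eigenvalues i) = ∑ i, |hA.eigenvalues i| := by
  have hsq : Aᴴ * A = cfc (fun x : ℝ => x ^ 2) A := by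
    rw [cfc_pow_id A 2 hA.isSelfAdjoint, hA.eq, sq]
  have hmap := (posSemidef_conjTranspose_mul_self A).1.map_eigenvalues_eq_of_charpoly_eq
    (μ := fun i => hA.eigenvalues i ^ 2) (by rw [hsq, hA.charpoly_cfc_eq]; rfl)
  have hsum := congrArg (fun s => (s.map Real.sqrt).sum) hmap
  simp only [Multiset.map_map, Function.comp_def, Real.sqrt_sq_eq_abs] at hsum
  exact hsum

lemma norm_apply_self_le (hA : A.IsHermitian) (i : n) :
    ‖A i i‖ ≤ ∑ j, |hA.eigenvalues j| * ‖hA.eigenvectorBasis j i‖ ^ 2 := by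
  have hAii : A i i = ∑ j, hA.eigenvectorBasis j i * (hA.eigenvalues j : ℂ) *
      star (hA.eigenvectorBasis j i) := by
    conv_lhs => rw [hA.spectral_theorem]
    rw [Unitary.conjStarAlgAut_apply, mul_apply]
    simp [mul_diagonal]
  rw [hAii]
  refine (norm_sum_le _ _).trans_eq (sum_congr rfl fun j _ => ?_)
  rw [norm_mul, norm_mul, norm_star, Complex.norm_real, Real.norm_eq_abs]
  ring

lemma sum_norm_diag_le_sum_abs_eigenvalues (hA : A.IsHermitian) :
    ∑ i, ‖A i i‖ ≤ ∑ j, |hA.eigenvalues j| :=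
  calc ∑ i, ‖A i i‖ ≤ ∑ i, ∑ j, |hA.eigenvalues j| * ‖hA.eigenvectorBasis j i‖ ^ 2 :=
        sum_le_sum fun i _ => hA.norm_apply_self_le i
    _ = ∑ j, |hA.eigenvalues j| * ‖hA.eigenvectorBasis j‖ ^ 2 := by
        rw [sum_comm]
        simp only [EuclideanSpace.norm_sq_eq, mul_sum]
    _ = ∑ j, |hA.eigenvalues j| := by simp [hA.eigenvectorBasis.orthonormal.1]

end Matrix.IsHermitian

lemma Matrix.IsHermitian.sum_norm_diag_le_traceNorm {n : Type} [Fintype n] [DecidableEq n]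
    {A : Matrix n n ℂ} (hA : A.IsHermitian) : ∑ i, ‖A i i‖ ≤ traceNorm A := by
  rw [traceNorm, hA.sum_sqrt_eigenvalues_conjTranspose_mul_self]
  exact hA.sum_norm_diag_le_sum_abs_eigenvalues

def partialTraceRight {m k α : Type*} [Fintype k] [AddCommMonoid α]
    (X : Matrix (m × k) (m × k) α) : Matrix m m α :=
  of fun i i' => ∑ t, X (i, t) (i', t)

section PartialTrace

variable {m k α : Type*} [Fintype k] [AddCommMonoid α]

lemma Matrix.IsHermitian.partialTraceRight [StarAddMonoid α] {X : Matrix (m × k) (m × k) α}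
    (hX : X.IsHermitian) : (partialTraceRight X).IsHermitian := by
  ext i i'
  simp only [_root_.partialTraceRight, conjTranspose_apply, of_apply, star_sum]
  exact sum_congr rfl fun t _ => by rw [← conjTranspose_apply, hX.eq]

lemma partialTraceRight_diagonal [DecidableEq m] [DecidableEq k] (f : m × k → α) :
    partialTraceRight (diagonal f) = diagonal fun i => ∑ t, f (i, t) := by
  ext i i'
  by_cases h : i = i' <;> simp [partialTraceRight, diagonal_apply, h]

end PartialTrace

lemma sum_norm_sub_le_traceNorm_blockDiagonal_sub {M D : Type} [Fintype M] [DecidableEq M]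
    [Fintype D] [DecidableEq D] {B : D → Matrix M M ℂ} (hB : ∀ d, (B d).IsHermitian) (c : ℝ)
    (d₀ : D) : ∑ m, ‖B d₀ m m - c‖ ≤ traceNorm (blockDiagonal B - (c : ℂ) • 1) := by
  have hH : (blockDiagonal B - (c : ℂ) • 1).IsHermitian :=
    (isHermitian_blockDiagonal_iff.mpr hB).sub (isHermitian_one.smul (Complex.conj_ofReal c))
  calc ∑ m, ‖B d₀ m m - c‖ = ∑ m, ‖(blockDiagonal B - (c : ℂ) • 1) (m, d₀) (m, d₀)‖ := by
        simp [blockDiagonal_apply_eq]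
    _ ≤ ∑ p : M × D, ‖(blockDiagonal B - (c : ℂ) • 1) p p‖ := by
        rw [Fintype.sum_prod_type]
        exact sum_le_sum fun m _ =>
          single_le_sum (fun d _ => norm_nonneg ((blockDiagonal B - (c : ℂ) • 1) (m, d) (m, d)))
            (mem_univ d₀)
    _ ≤ _ := hH.sum_norm_diag_le_traceNorm

section UnitaryConjugation

variable {n : Type*} [Fintype n] [DecidableEq n] {V : Matrix n n ℂ} (hV : V ∈ unitaryGroup n ℂ)
include hV

lemma trace_conjTranspose_mul_mul_of_mem_unitaryGroup (X : Matrix n n ℂ) :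
    (Vᴴ * X * V).trace = X.trace := by
  rw [trace_mul_cycle, ← star_eq_conjTranspose, mem_unitaryGroup_iff.mp hV, one_mul]

lemma mul_conjTranspose_mul_mul_mul_conjTranspose (X : Matrix n n ℂ) :
    V * (Vᴴ * X * V) * Vᴴ = X := by
  have h : V * Vᴴ = 1 := by rw [← star_eq_conjTranspose, mem_unitaryGroup_iff.mp hV]
  simp only [← Matrix.mul_assoc, h, Matrix.one_mul]
  rw [Matrix.mul_assoc, h, Matrix.mul_one]

lemma smul_one_sub_conjTranspose_mul_mul (a : ℂ) (X : Matrix n n ℂ) :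
    a • 1 - Vᴴ * X * V = Vᴴ * (a • 1 - X) * V := by
  have h : Vᴴ * V = 1 := by rw [← star_eq_conjTranspose, mem_unitaryGroup_iff'.mp hV]
  rw [Matrix.mul_sub, Matrix.sub_mul, mul_smul_comm, Matrix.mul_one, smul_mul_assoc, h]

end UnitaryConjugation

noncomputable def uniformWeight {n : Type*} [DecidableEq n] (T : Finset n) (i : n) : ℝ :=
  if i ∈ T then (#T : ℝ)⁻¹ else 0

noncomputable def uniformState {n : Type*} [DecidableEq n] (T : Finset n) : Matrix n n ℂ :=
  diagonal fun i => (uniformWeight T i : ℂ)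

section UniformState

variable {n : Type*} [DecidableEq n]

lemma posSemidef_uniformState (T : Finset n) : (uniformState T).PosSemidef :=
  posSemidef_diagonal_iff.mpr fun i => by
    rw [Complex.zero_le_real, uniformWeight]
    split_ifs <;> positivity

lemma trace_uniformState [Fintype n] {T : Finset n} (hT : T.Nonempty) :
    (uniformState T).trace = 1 := by
  rw [uniformState, trace_diagonal, ← Complex.ofReal_sum, Complex.ofReal_eq_one]
  simp [uniformWeight, sum_ite_mem, hT.card_ne_zero]

lemma posSemidef_smul_one_sub_uniformState {T : Finset n} {a : ℝ} (ha : (#T : ℝ)⁻¹ ≤ a) :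
    ((a : ℂ) • 1 - uniformState T).PosSemidef := by
  have h : (a : ℂ) • 1 - uniformState T = diagonal fun i => ((a - uniformWeight T i : ℝ) : ℂ) := by
    ext i j
    by_cases hij : i = j <;> simp [uniformState, one_apply, hij]
  rw [h, posSemidef_diagonal_iff]
  intro i
  rw [Complex.zero_le_real, sub_nonneg, uniformWeight]
  split_ifs
  · exact ha
  · exact (inv_nonneg.mpr (Nat.cast_nonneg _)).trans ha

lemma partialTraceRight_uniformState_product {k : Type*} [Fintype k] [DecidableEq k] [Nonempty k]
    (S : Finset n) :
    partialTraceRight (uniformState (S ×ˢ (univ : Finset k))) = uniformState S := by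
  rw [uniformState, partialTraceRight_diagonal, uniformState]
  congr 1
  ext i
  by_cases hi : i ∈ S <;> simp [uniformWeight, hi, card_product]

lemma sum_norm_uniformState_sub_inv_card [Fintype n] [Nonempty n] {S : Finset n}
    (hS : 2 * #S = Fintype.card n) :
    ∑ i, ‖uniformState S i i - (Fintype.card n : ℂ)⁻¹‖ = 1 := by
  have hS' : (Fintype.card n : ℝ) = 2 * #S := by exact_mod_cast hS.symm
  have hterm : ∀ i, ‖uniformState S i i - (Fintype.card n : ℂ)⁻¹‖ = (Fintype.card n : ℝ)⁻¹ := by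
    intro i
    rw [uniformState, diagonal_apply_eq, ← Complex.ofReal_natCast, ← Complex.ofReal_inv,
      ← Complex.ofReal_sub, Complex.norm_real, Real.norm_eq_abs, uniformWeight]
    split_ifs with hi
    · have hpos : (0 : ℝ) < #S := by exact_mod_cast card_pos.mpr ⟨i, hi⟩
      rw [hS', abs_of_nonneg] <;> field_simp <;> linarith
    · simp
  rw [sum_congr rfl fun i _ => hterm i, sum_const, card_univ, nsmul_eq_mul,
    mul_inv_cancel₀ (by positivity)]

end UniformState

/-- `(1/|D|) Σ_d tr_{N\M}[U^d ρ (U^d)†] ⊗ |d⟩⟨d|`; it unfolds to the output matrix in the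
extractor property. -/
noncomputable def extractorOutput {M J D : Type*} [Fintype M] [Fintype J] [Fintype D]
    [DecidableEq D] (U : D → Matrix (M × J) (M × J) ℂ) (ρ : Matrix (M × J) (M × J) ℂ) :
    Matrix (M × D) (M × D) ℂ :=
  blockDiagonal fun d => (Fintype.card D : ℂ)⁻¹ • partialTraceRight (U d * ρ * (U d)ᴴ)

lemma inv_card_mul_sum_norm_sub_le_traceNorm_extractorOutput_sub {M J D : Type} [Fintype M]
    [DecidableEq M] [Fintype J] [Fintype D] [DecidableEq D] (U : D → Matrix (M × J) (M × J) ℂ)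
    {ρ : Matrix (M × J) (M × J) ℂ} (hρ : ρ.IsHermitian) (d₀ : D) :
    (Fintype.card D : ℝ)⁻¹ *
        ∑ m, ‖partialTraceRight (U d₀ * ρ * (U d₀)ᴴ) m m - (Fintype.card M : ℂ)⁻¹‖
      ≤ traceNorm (extractorOutput U ρ - ((Fintype.card M * Fintype.card D : ℂ))⁻¹ • 1) := by
  have hB : ∀ d, ((Fintype.card D : ℂ)⁻¹ • partialTraceRight (U d * ρ * (U d)ᴴ)).IsHermitian :=
    fun d => (isHermitian_mul_mul_conjTranspose (U d) hρ).partialTraceRight.smul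
      (by simp [isSelfAdjoint_iff])
  have hc : ((Fintype.card M * Fintype.card D : ℂ))⁻¹
      = (((Fintype.card M * Fintype.card D : ℝ))⁻¹ : ℝ) := by push_cast; rfl
  rw [hc]
  refine le_of_eq_of_le ?_ (sum_norm_sub_le_traceNorm_blockDiagonal_sub hB _ d₀)
  rw [mul_sum]
  refine sum_congr rfl fun m _ => ?_
  have hnorm (x : ℂ) :
      ‖(Fintype.card D : ℂ)⁻¹ * x - (((Fintype.card M * Fintype.card D : ℝ))⁻¹ : ℝ)‖
        = (Fintype.card D : ℝ)⁻¹ * ‖x - (Fintype.card M : ℂ)⁻¹‖ := by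
    rw [show (Fintype.card D : ℂ)⁻¹ * x - (((Fintype.card M * Fintype.card D : ℝ))⁻¹ : ℝ)
        = ((Fintype.card D : ℝ)⁻¹ : ℝ) * (x - (Fintype.card M : ℂ)⁻¹) by push_cast; ring,
      norm_mul, Complex.norm_real, Real.norm_of_nonneg (by positivity)]
  rw [Matrix.smul_apply, smul_eq_mul, hnorm]

lemma two_div_le_two_rpow_neg {N k : ℝ} (hN : 0 < N) (hk : k ≤ Real.logb 2 N - 1) :
    2 / N ≤ (2 : ℝ) ^ (-k) := by
  calc 2 / N = (2 : ℝ) ^ (1 - Real.logb 2 N) := by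
        rw [Real.rpow_sub two_pos, Real.rpow_one, Real.rpow_logb two_pos (by norm_num) hN]
    _ ≤ (2 : ℝ) ^ (-k) := Real.rpow_le_rpow_of_exponent_le one_le_two (by linarith)

theorem quantum_extractor_seed_lower_bound_general
    {M J D : Type} [Fintype M] [DecidableEq M] [Fintype J] [DecidableEq J]
    [Fintype D] [DecidableEq D] [Nonempty M] [Nonempty J] [Nonempty D]
    (hMeven : Even (Fintype.card M))
    (U : D → Matrix (M × J) (M × J) ℂ) (hU : ∀ i, U i ∈ Matrix.unitaryGroup (M × J) ℂ)
    (k ε : ℝ)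
    (hk : k ≤ Real.logb 2 (Fintype.card (M × J)) - 1)
    -- the (k,ε)-quantum extractor property
    (hext : ∀ ρ : Matrix (M × J) (M × J) ℂ, ρ.PosSemidef → ρ.trace = 1 →
      (((((2 : ℝ) ^ (-k) : ℝ) : ℂ) • (1 : Matrix (M × J) (M × J) ℂ) - ρ).PosSemidef) →
      traceNorm
        ((Matrix.of fun (mi : M × D) (mi' : M × D) =>
            if mi.2 = mi'.2 then
              ((Fintype.card D : ℂ))⁻¹ *
                ∑ t : J, (U mi.2 * ρ * (U mi.2)ᴴ) (mi.1, t) (mi'.1, t)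
            else 0)
          - ((Fintype.card M * Fintype.card D : ℂ))⁻¹ • (1 : Matrix (M × D) (M × D) ℂ))
        ≤ ε) :
    Real.logb 2 (Fintype.card D) ≥ Real.logb 2 (1 / ε) := by
  obtain ⟨S, -, hS⟩ := exists_subset_card_eq (s := (univ : Finset M))
    (n := Fintype.card M / 2) (by simpa using Nat.div_le_self _ 2)
  have hS2 : 2 * #S = Fintype.card M := by rw [hS]; exact Nat.mul_div_cancel' hMeven.two_dvd
  have hSne : S.Nonempty := card_pos.mp (by have := Fintype.card_pos (α := M); omega)
  let V := U (Classical.arbitrary D)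
  let γ := Vᴴ * uniformState (S ×ˢ (univ : Finset J)) * V
  have hγ : γ.PosSemidef := (posSemidef_uniformState _).conjTranspose_mul_mul_same V
  have hmin : (#(S ×ˢ (univ : Finset J)) : ℝ)⁻¹ ≤ (2 : ℝ) ^ (-k) := by
    refine le_of_eq_of_le ?_ (two_div_le_two_rpow_neg (by positivity) hk)
    rw [card_product, card_univ, Fintype.card_prod, Nat.cast_mul, Nat.cast_mul, ← hS2]
    push_cast
    field_simp
  have hD : (Fintype.card D : ℝ)⁻¹ ≤ ε := calc
    (Fintype.card D : ℝ)⁻¹ = (Fintype.card D : ℝ)⁻¹ *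
        ∑ m, ‖partialTraceRight (V * γ * Vᴴ) m m - (Fintype.card M : ℂ)⁻¹‖ := by
      rw [mul_conjTranspose_mul_mul_mul_conjTranspose (hU _),
        partialTraceRight_uniformState_product, sum_norm_uniformState_sub_inv_card hS2, mul_one]
    _ ≤ _ := inv_card_mul_sum_norm_sub_le_traceNorm_extractorOutput_sub U hγ.1 _
    _ ≤ ε := hext γ hγ
      (by rw [trace_conjTranspose_mul_mul_of_mem_unitaryGroup (hU _),
        trace_uniformState (hSne.product univ_nonempty)])
      (by rw [smul_one_sub_conjTranspose_mul_mul (hU _)]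
          exact (posSemidef_smul_one_sub_uniformState hmin).conjTranspose_mul_mul_same V)
  have hε : 0 < ε := lt_of_lt_of_le (by positivity) hD
  exact Real.logb_le_logb_of_le one_lt_two (by positivity)
    (by rw [one_div]; exact inv_le_of_inv_le₀ (by positivity) hD)

/-- every (k,ε)-quantum extractor with `k ≤ n − 1` has seed size
`d ≥ log(1/ε)`, i.e. `|D| ≥ 1/ε`.  Here `H_N = H_M ⊗ H_{N\M}` (spaces of qubit strings,
so `|M|` is even), `H_min(N)_ρ ≥ k` means `λ_max(ρ) ≤ 2^{−k}`, and the extractor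
property is that the output is `ε`-close to `1_M/|M| ⊗ 1_D/|D|` in trace norm. -/
theorem quantum_extractor_seed_lower_bound
    {M J D : Type} [Fintype M] [DecidableEq M] [Fintype J] [DecidableEq J]
    [Fintype D] [DecidableEq D] [Nonempty M] [Nonempty J] [Nonempty D]
    (hMeven : Even (Fintype.card M))
    (U : D → Matrix (M × J) (M × J) ℂ) (hU : ∀ i, U i ∈ Matrix.unitaryGroup (M × J) ℂ)
    (k ε : ℝ) (hε : 0 < ε)
    (hk : k ≤ Real.logb 2 (Fintype.card (M × J)) - 1)
    -- the (k,ε)-quantum extractor property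
    (hext : ∀ ρ : Matrix (M × J) (M × J) ℂ, ρ.PosSemidef → ρ.trace = 1 →
      (((((2 : ℝ) ^ (-k) : ℝ) : ℂ) • (1 : Matrix (M × J) (M × J) ℂ) - ρ).PosSemidef) →
      traceNorm
        ((Matrix.of fun (mi : M × D) (mi' : M × D) =>
            if mi.2 = mi'.2 then
              ((Fintype.card D : ℂ))⁻¹ *
                ∑ t : J, (U mi.2 * ρ * (U mi.2)ᴴ) (mi.1, t) (mi'.1, t)
            else 0)
          - ((Fintype.card M * Fintype.card D : ℂ))⁻¹ • (1 : Matrix (M × D) (M × D) ℂ))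
        ≤ ε) :
    Real.logb 2 (Fintype.card D) ≥ Real.logb 2 (1 / ε) :=
  quantum_extractor_seed_lower_bound_general hMeven U hU k ε hk hext
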